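/- arXiv:1407.0664 — 2 statements merged into one kernel-verified Lean document; each statement's English description precedes it below -/
import Mathlib

section
/- Let H be a complex Hilbert space and M a von Neumann algebra on H of type II₁, and let ρ and ρ̃ be two faithful normal tracial states on M. Then M has Property Γ with respect to ρ if and only if M has Property Γ with respect to ρ̃. -/
/-! For faithful normal tracial states `ρ`, `ρ'` on `M`, take a bounded sequence `cₘ` in `M`
with `‖cₘ‖₂,ρ → 0`. Along any ultrafilter, `cₘ* cₘ` has a weak-operator limit `e` (balls are
compact in that topology); `e` lies in `M`, is positive, and `ρ e = 0` by normality, so `e = 0`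
by faithfulness, and normality of `ρ'` gives `‖cₘ‖₂,ρ' → 0`. Applied to the commutators
`pᵢ aⱼ - aⱼ pᵢ` of partitions witnessing Γ for `ρ` with tolerance `1/(m+1)`, which are bounded
by `2‖aⱼ‖`, this produces partitions witnessing Γ for `ρ'`. -/

set_option maxHeartbeats 1000000
set_option synthInstance.maxHeartbeats 400000

open scoped ComplexOrder
open Filter Topology

noncomputable section

namespace Paper

variable {H : Type*} [NormedAddCommGroup H] [InnerProductSpace ℂ H] [CompleteSpace H]

/-- Convergence in the weak operator topology along a filter. -/
def WOTConv {E : Type*} [NormedAddCommGroup E] [InnerProductSpace ℂ E] {ι : Type*}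
    (l : Filter ι) (T : ι → E →L[ℂ] E) (S : E →L[ℂ] E) : Prop :=
  ∀ x y : E, Tendsto (fun t => (inner ℂ (T t x) y : ℂ)) l (𝓝 (inner ℂ (S x) y))

/-- `p` is a (self-adjoint idempotent) projection. -/
def IsProjection (p : H →L[ℂ] H) : Prop := star p = p ∧ p * p = p

/-- Two projections are (Murray-von Neumann) equivalent in `S`. -/
def EquivProj (S : Set (H →L[ℂ] H)) (p q : H →L[ℂ] H) : Prop :=
  ∃ v ∈ S, star v * v = p ∧ v * star v = q

/-- `ρ` is a faithful normal tracial state on (the von Neumann algebra whose underlying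
set is) `S`. -/
structure IsFNTState (S : Set (H →L[ℂ] H)) (ρ : (H →L[ℂ] H) →ₗ[ℂ] ℂ) : Prop where
  map_one : ρ 1 = 1
  nonneg : ∀ a ∈ S, 0 ≤ ρ (star a * a)
  tracial : ∀ a ∈ S, ∀ b ∈ S, ρ (a * b) = ρ (b * a)
  faithful : ∀ a ∈ S, ρ (star a * a) = 0 → a = 0
  normal : ∀ {ι : Type} (l : Filter ι) (T : ι → H →L[ℂ] H) (T' : H →L[ℂ] H),
    (∀ t, T t ∈ S) → (∀ t, ‖T t‖ ≤ 1) → T' ∈ S → ‖T'‖ ≤ 1 →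
    WOTConv l T T' → Tendsto (fun t => ρ (T t)) l (𝓝 (ρ T'))

/-- The 2-norm `‖a‖₂ = √ρ(a*a)` associated to a state `ρ`. -/
def norm2 (ρ : (H →L[ℂ] H) →ₗ[ℂ] ℂ) (a : H →L[ℂ] H) : ℝ :=
  Real.sqrt (ρ (star a * a)).re

/-- `M` is a von Neumann algebra of type II₁: it admits a faithful normal tracial state and
contains no nonzero projection `p` with `pMp` commutative. -/
def IsTypeII1 (M : VonNeumannAlgebra H) : Prop :=
  (∃ ρ : (H →L[ℂ] H) →ₗ[ℂ] ℂ, IsFNTState (M : Set (H →L[ℂ] H)) ρ) ∧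
  ∀ p ∈ M, IsProjection p → p ≠ 0 →
    ¬ (∀ x ∈ M, ∀ y ∈ M, p * x * p * (p * y * p) = p * y * p * (p * x * p))

/-- Property Γ (the ε–2-norm version) for the von Neumann algebra with underlying set `S`,
with respect to the faithful normal tracial state `ρ`. -/
def PropertyGammaOn (S : Set (H →L[ℂ] H)) (ρ : (H →L[ℂ] H) →ₗ[ℂ] ℂ) : Prop :=
  ∀ ε : ℝ, 0 < ε → ∀ n : ℕ, 0 < n → ∀ (k : ℕ) (a : Fin k → H →L[ℂ] H), (∀ j, a j ∈ S) →
    ∃ p : Fin n → H →L[ℂ] H,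
      (∀ i, p i ∈ S ∧ IsProjection (p i)) ∧
      (∀ i j, i ≠ j → p i * p j = 0) ∧
      (∀ i j, EquivProj S (p i) (p j)) ∧
      (∑ i, p i) = 1 ∧
      ∀ i j, norm2 ρ (p i * a j - a j * p i) < ε

/-- Property Γ̂ : the net/weak-operator-topology version of Property Γ. -/
def PropertyGammaHat (M : VonNeumannAlgebra H) : Prop :=
  ∀ (k : ℕ) (a : Fin k → H →L[ℂ] H), (∀ j, a j ∈ M) → ∀ n : ℕ, 0 < n →
    ∃ (Λ : Type) (_ : Preorder Λ), Nonempty Λ ∧ IsDirected Λ (· ≤ ·) ∧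
      ∃ p : Fin n → Λ → H →L[ℂ] H,
        (∀ i lam, p i lam ∈ M ∧ IsProjection (p i lam)) ∧
        (∀ lam, ∀ i j, i ≠ j → p i lam * p j lam = 0) ∧
        (∀ lam i j, EquivProj (M : Set (H →L[ℂ] H)) (p i lam) (p j lam)) ∧
        (∀ lam, (∑ i, p i lam) = 1) ∧
        ∀ i j, WOTConv atTop
          (fun lam => star (p i lam * a j - a j * p i lam) * (p i lam * a j - a j * p i lam))
          (0 : H →L[ℂ] H)

/-- `R` is a hyperfinite type II₁ subfactor of `M`. -/
structure IsHyperfiniteII1Subfactor (M R : VonNeumannAlgebra H) : Prop where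
  subset : (R : Set (H →L[ℂ] H)) ⊆ (M : Set (H →L[ℂ] H))
  infiniteDimensional : ¬ ∃ (d : ℕ) (f : Fin d → H →L[ℂ] H),
    ∀ x ∈ R, x ∈ Submodule.span ℂ (Set.range f)
  factor : ∀ x ∈ R, (∀ y ∈ R, x * y = y * x) → ∃ c : ℂ, x = c • (1 : H →L[ℂ] H)
  hyperfinite : ∃ A : ℕ → StarSubalgebra ℂ (H →L[ℂ] H),
    Monotone A ∧
    (∀ n, (A n : Set (H →L[ℂ] H)) ⊆ (R : Set (H →L[ℂ] H))) ∧
    (∀ n, ∃ (d : ℕ) (f : Fin d → H →L[ℂ] H),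
      ∀ x ∈ A n, x ∈ Submodule.span ℂ (Set.range f)) ∧
    ∀ x ∈ R, ∀ ε : ℝ, 0 < ε → ∀ (m : ℕ) (v : Fin m → H),
      ∃ y : H →L[ℂ] H, (∃ n, y ∈ A n) ∧ ∀ i, ‖(y - x) (v i)‖ < ε

/-- Membership of all matrix entries in a set. -/
def MatMem {n : ℕ} (S : Set (H →L[ℂ] H)) (A : Matrix (Fin n) (Fin n) (H →L[ℂ] H)) : Prop :=
  ∀ i j, A i j ∈ S

/-- The identification `Θ` of an `n × n` matrix of operators on `H` with an operator on the
`ℓ²`-direct sum `H⁽ⁿ⁾` of `n` copies of `H`. -/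
def Theta (n : ℕ) (T : Matrix (Fin n) (Fin n) (H →L[ℂ] H)) :
    PiLp 2 (fun _ : Fin n => H) →L[ℂ] PiLp 2 (fun _ : Fin n => H) :=
  ((PiLp.continuousLinearEquiv 2 ℂ (fun _ : Fin n => H)).symm.toContinuousLinearMap).comp
    (ContinuousLinearMap.pi
      (fun i => ∑ j, (T i j).comp
        ((ContinuousLinearMap.proj (R := ℂ) (φ := fun _ : Fin n => H) j).comp
          (PiLp.continuousLinearEquiv 2 ℂ (fun _ : Fin n => H)).toContinuousLinearMap)))

instance piLpComplete (n : ℕ) : CompleteSpace (PiLp 2 (fun _ : Fin n => H)) :=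
  inferInstance

/-- `τ` is the center-valued trace on `M_n(M)`. -/
structure IsCenterValuedTrace (M : VonNeumannAlgebra H) (n : ℕ)
    (τ : Matrix (Fin n) (Fin n) (H →L[ℂ] H) → Matrix (Fin n) (Fin n) (H →L[ℂ] H)) :
    Prop where
  map_add : ∀ A B, MatMem (M : Set (H →L[ℂ] H)) A → MatMem (M : Set (H →L[ℂ] H)) B →
    τ (A + B) = τ A + τ B
  map_smul : ∀ (c : ℂ) A, MatMem (M : Set (H →L[ℂ] H)) A → τ (c • A) = c • τ A
  mem : ∀ A, MatMem (M : Set (H →L[ℂ] H)) A → MatMem (M : Set (H →L[ℂ] H)) (τ A)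
  central : ∀ A, MatMem (M : Set (H →L[ℂ] H)) A → ∀ B, MatMem (M : Set (H →L[ℂ] H)) B →
    τ A * B = B * τ A
  tracial : ∀ A B, MatMem (M : Set (H →L[ℂ] H)) A → MatMem (M : Set (H →L[ℂ] H)) B →
    τ (A * B) = τ (B * A)
  fix_central : ∀ Z, MatMem (M : Set (H →L[ℂ] H)) Z →
    (∀ B, MatMem (M : Set (H →L[ℂ] H)) B → Z * B = B * Z) → τ Z = Z
  positive : ∀ A, MatMem (M : Set (H →L[ℂ] H)) A → (Theta n (τ (star A * A))).IsPositive
  normal : ∀ {ι : Type} (l : Filter ι) (T : ι → Matrix (Fin n) (Fin n) (H →L[ℂ] H)) (T'),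
    (∀ t, MatMem (M : Set (H →L[ℂ] H)) (T t)) → (∀ t, ‖Theta n (T t)‖ ≤ 1) →
    MatMem (M : Set (H →L[ℂ] H)) T' → ‖Theta n T'‖ ≤ 1 →
    WOTConv l (fun t => Theta n (T t)) (Theta n T') →
    WOTConv l (fun t => Theta n (τ (T t))) (Theta n (τ T'))

/-- The quantity `γ_n(A) = (‖A‖² + n‖τ_n(A*A)‖)^{1/2}`. -/
def gammaN (n : ℕ)
    (τ : Matrix (Fin n) (Fin n) (H →L[ℂ] H) → Matrix (Fin n) (Fin n) (H →L[ℂ] H))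
    (A : Matrix (Fin n) (Fin n) (H →L[ℂ] H)) : ℝ :=
  Real.sqrt (‖Theta n A‖ ^ 2 + n * ‖Theta n (τ (star A * A))‖)

/-- The `n`-fold amplification `φ⁽ⁿ⁾` of a `k`-linear map `φ`, defined entrywise by
`(φ⁽ⁿ⁾(A₁,…,A_k))_{ij} = Σ_{j₁,…,j_{k−1}} φ((A₁)_{i j₁}, (A₂)_{j₁ j₂}, …, (A_k)_{j_{k−1} j})`. -/
def ampl {k n : ℕ} (φ : (Fin k → (H →L[ℂ] H)) → (H →L[ℂ] H))
    (A : Fin k → Matrix (Fin n) (Fin n) (H →L[ℂ] H)) : Matrix (Fin n) (Fin n) (H →L[ℂ] H) :=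
  fun i j => ∑ f : Fin (k + 1) → Fin n,
    if f 0 = i ∧ f (Fin.last k) = j then φ (fun l => A l (f l.castSucc) (f l.succ)) else 0

/-- `φ` is `R`-multimodular (on tuples from `Mset`). -/
def Multimodular {k : ℕ} (Rset Mset : Set (H →L[ℂ] H))
    (φ : (Fin (k + 1) → H →L[ℂ] H) → H →L[ℂ] H) : Prop :=
  ∀ s ∈ Rset, ∀ a : Fin (k + 1) → H →L[ℂ] H, (∀ i, a i ∈ Mset) →
    s * φ a = φ (Function.update a 0 (s * a 0)) ∧
    φ a * s = φ (Function.update a (Fin.last k) (a (Fin.last k) * s)) ∧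
    ∀ i : Fin k, φ (Function.update a i.castSucc (a i.castSucc * s))
      = φ (Function.update a i.succ (s * a i.succ))

/-- `φ` is separately normal: fixing all variables but one, bounded weak-operator
convergent nets are sent to weak-operator convergent nets. -/
def SepNormal {k : ℕ} (Mset : Set (H →L[ℂ] H))
    (φ : (Fin k → H →L[ℂ] H) → H →L[ℂ] H) : Prop :=
  ∀ (i : Fin k) (a : Fin k → H →L[ℂ] H), (∀ j, a j ∈ Mset) →
    ∀ {ι : Type} (l : Filter ι) (b : ι → H →L[ℂ] H) (b' : H →L[ℂ] H) (C : ℝ),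
      (∀ t, b t ∈ Mset) → (∀ t, ‖b t‖ ≤ C) → b' ∈ Mset →
      WOTConv l b b' →
      WOTConv l (fun t => φ (Function.update a i (b t))) (φ (Function.update a i b'))

/-- The map `φ_{σ,p}`: the variables in `σ` are replaced by commutators with `p`. -/
def phiSigma {k : ℕ} (φ : (Fin k → H →L[ℂ] H) → H →L[ℂ] H) (p : H →L[ℂ] H)
    (σ : Finset (Fin k)) (a : Fin k → H →L[ℂ] H) : H →L[ℂ] H :=
  φ (fun i => if i ∈ σ then p * a i - a i * p else a i)

/-- The map `φ_{σ,p,i}` (for `i ≤ l(σ)`, the least element of `σ`). -/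
def phiSigmaI {k : ℕ} (φ : (Fin k → H →L[ℂ] H) → H →L[ℂ] H) (p : H →L[ℂ] H)
    (σ : Finset (Fin k)) (hσ : σ.Nonempty) (i : Fin k) (a : Fin k → H →L[ℂ] H) :
    H →L[ℂ] H :=
  φ (fun j =>
    if j = i then
      (if i = σ.min' hσ then p * (p * a i - a i * p) else p * a i - a i * p)
    else if j ∈ σ then p * a j - a j * p else a j)

/-- The Hochschild coboundary operator `∂`. -/
def cobound {k : ℕ} (φ : (Fin k → H →L[ℂ] H) → H →L[ℂ] H)
    (a : Fin (k + 1) → H →L[ℂ] H) : H →L[ℂ] H :=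
  a 0 * φ (fun i => a i.succ)
    + (∑ i : Fin k, (-1 : ℂ) ^ ((i : ℕ) + 1) •
        φ (fun j => if (j : ℕ) < (i : ℕ) then a j.castSucc
            else if j = i then a i.castSucc * a i.succ else a j.succ))
    + (-1 : ℂ) ^ (k + 1) • (φ (fun i => a i.castSucc) * a (Fin.last k))

theorem _root_.VonNeumannAlgebra.isClosed (M : VonNeumannAlgebra H) :
    IsClosed (M : Set (H →L[ℂ] H)) := by
  rw [← M.centralizer_centralizer]
  exact Set.isClosed_centralizer _

theorem _root_.VonNeumannAlgebra.mem_of_wotConv (M : VonNeumannAlgebra H) {ι : Type*}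
    {l : Filter ι} [l.NeBot] {T : ι → H →L[ℂ] H} {S : H →L[ℂ] H} (hT : ∀ t, T t ∈ M)
    (hS : WOTConv l T S) : S ∈ M := by
  rw [← SetLike.mem_coe, ← M.centralizer_centralizer]
  refine Set.mem_centralizer_iff.mpr fun z hz => ?_
  ext x
  refine ext_inner_right ℂ fun y => ?_
  have hlim : Tendsto (fun t => inner ℂ (T t x) (z.adjoint y)) l (𝓝 (inner ℂ (S (z x)) y)) := by
    refine (hS (z x) y).congr fun t => ?_
    rw [ContinuousLinearMap.adjoint_inner_right, ← mul_apply_eq_comp,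
      Set.mem_centralizer_iff.mp hz (T t) (hT t), mul_apply_eq_comp]
  rw [mul_apply_eq_comp, ← ContinuousLinearMap.adjoint_inner_right,
    tendsto_nhds_unique (hS x _) hlim, mul_apply_eq_comp]

theorem nonneg_of_wotConv_star_mul_self {ι : Type*} {l : Filter ι} [l.NeBot]
    {c : ι → H →L[ℂ] H} {e : H →L[ℂ] H} (h : WOTConv l (fun t => star (c t) * c t) e) :
    0 ≤ e := by
  rw [ContinuousLinearMap.nonneg_iff_isPositive, ContinuousLinearMap.isPositive_iff_complex]
  intro x
  have hnonneg : 0 ≤ inner ℂ (e x) x := by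
    refine ge_of_tendsto (h x x) (Eventually.of_forall fun t => ?_)
    rw [mul_apply_eq_comp, ContinuousLinearMap.star_eq_adjoint,
      ContinuousLinearMap.adjoint_inner_left, inner_self_eq_norm_sq_to_K]
    positivity
  obtain ⟨hre, him⟩ := Complex.nonneg_iff.mp hnonneg
  exact ⟨Complex.ext (by simp) (by simp [him]), hre⟩

theorem exists_wotConv_of_norm_le {E : Type*} [NormedAddCommGroup E] [InnerProductSpace ℂ E]
    [CompleteSpace E] {ι : Type*} (U : Ultrafilter ι) {T : ι → E →L[ℂ] E} {C : ℝ}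
    (hT : ∀ t, ‖T t‖ ≤ C) : ∃ S : E →L[ℂ] E, ‖S‖ ≤ C ∧ WOTConv U T S := by
  have hC : 0 ≤ C := (norm_nonneg _).trans (hT (U.nonempty_of_mem univ_mem).some)
  have hbound : ∀ x y t, ‖inner ℂ (T t x) y‖ ≤ C * ‖x‖ * ‖y‖ := fun x y t =>
    (norm_inner_le_norm _ _).trans (by gcongr; exact (T t).le_of_opNorm_le (hT t) x)
  have hlim : ∀ x y, ∃ c, Tendsto (fun t => inner ℂ (T t x) y) U (𝓝 c) := fun x y => by
    obtain ⟨c, -, hc⟩ := (isCompact_closedBall (0 : ℂ) (C * ‖x‖ * ‖y‖)).ultrafilter_le_nhds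
      (U.map fun t => inner ℂ (T t x) y) (tendsto_principal.2 (Eventually.of_forall fun t =>
        mem_closedBall_zero_iff.2 (hbound x y t)))
    exact ⟨c, hc⟩
  choose φ hφ using hlim
  have hφ_eq {x y : E} {c : ℂ} (h : Tendsto (fun t => inner ℂ (T t x) y) U (𝓝 c)) : φ x y = c :=
    tendsto_nhds_unique (hφ x y) h
  let B : E →L⋆[ℂ] E →L[ℂ] ℂ :=
    (LinearMap.mk₂'ₛₗ (starRingEnd ℂ) (RingHom.id ℂ) φ
      (fun x x' y => hφ_eq (by simpa [inner_add_left] using (hφ x y).add (hφ x' y)))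
      (fun c x y => hφ_eq (by
        simpa [inner_smul_left, mul_comm] using (hφ x y).const_mul (starRingEnd ℂ c)))
      (fun x y y' => hφ_eq (by simpa [inner_add_right] using (hφ x y).add (hφ x y')))
      (fun c x y => hφ_eq (by simpa [inner_smul_right] using (hφ x y).const_mul c))).mkContinuous₂
      C fun x y => le_of_tendsto (hφ x y).norm (Eventually.of_forall (hbound x y))
  refine ⟨InnerProductSpace.continuousLinearMapOfBilin B,
    ContinuousLinearMap.opNorm_le_bound _ hC fun x => ?_, fun x y => ?_⟩
  · calc ‖InnerProductSpace.continuousLinearMapOfBilin B x‖ = ‖B x‖ :=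
          (InnerProductSpace.toDual ℂ E).symm.norm_map (B x)
      _ ≤ C * ‖x‖ := B.le_of_opNorm_le (LinearMap.mkContinuous₂_norm_le _ hC _) x
  · rw [InnerProductSpace.continuousLinearMapOfBilin_apply]
    exact hφ x y

theorem IsFNTState.tendsto_of_wotConv {M : VonNeumannAlgebra H} {ρ : (H →L[ℂ] H) →ₗ[ℂ] ℂ}
    (hρ : IsFNTState (M : Set (H →L[ℂ] H)) ρ) {ι : Type} {l : Filter ι}
    {T : ι → H →L[ℂ] H} {T' : H →L[ℂ] H} {C : ℝ} (hT : ∀ t, T t ∈ M) (hTC : ∀ t, ‖T t‖ ≤ C)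
    (hT' : T' ∈ M) (hT'C : ‖T'‖ ≤ C) (h : WOTConv l T T') :
    Tendsto (fun t => ρ (T t)) l (𝓝 (ρ T')) := by
  obtain ⟨D, hD, hCD⟩ : ∃ D : ℝ, 0 < D ∧ C ≤ D := ⟨max C 1, by positivity, le_max_left _ _⟩
  set μ : ℂ := ((D⁻¹ : ℝ) : ℂ)
  have hμ_norm {a : H →L[ℂ] H} (ha : ‖a‖ ≤ C) : ‖μ • a‖ ≤ 1 := by
    rw [norm_smul, Complex.norm_real, Real.norm_of_nonneg (by positivity)]
    calc D⁻¹ * ‖a‖ ≤ D⁻¹ * D := by gcongr; exact ha.trans hCD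
      _ = 1 := inv_mul_cancel₀ hD.ne'
  have hscaled := hρ.normal l (fun t => μ • T t) (μ • T') (fun t => M.smul_mem (hT t) μ)
    (fun t => hμ_norm (hTC t)) (M.smul_mem hT' μ) (hμ_norm hT'C)
    (fun x y => by simpa [inner_smul_left, mul_comm] using (h x y).const_mul (starRingEnd ℂ μ))
  have hDμ (a : H →L[ℂ] H) : (D : ℂ) * ρ (μ • a) = ρ a := by
    rw [map_smul, smul_eq_mul, ← mul_assoc, ← Complex.ofReal_mul, mul_inv_cancel₀ hD.ne',
      Complex.ofReal_one, one_mul]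
  simpa only [hDμ] using hscaled.const_mul (D : ℂ)

theorem IsFNTState.eq_zero_of_nonneg {M : VonNeumannAlgebra H} {ρ : (H →L[ℂ] H) →ₗ[ℂ] ℂ}
    (hρ : IsFNTState (M : Set (H →L[ℂ] H)) ρ) {e : H →L[ℂ] H} (he : e ∈ M) (he0 : 0 ≤ e)
    (hρe : ρ e = 0) : e = 0 := by
  have hsqrt_mem : CFC.sqrt e ∈ M := by
    have : IsClosed (M.toStarSubalgebra : Set (H →L[ℂ] H)) := M.isClosed
    rw [CFC.sqrt_eq_real_sqrt e]
    exact cfcₙ_mem (𝕜' := ℂ) (s := M.toStarSubalgebra) Real.sqrt he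
  have hsqrt : star (CFC.sqrt e) * CFC.sqrt e = e := by
    rw [(CFC.sqrt_nonneg e).isSelfAdjoint.star_eq, CFC.sqrt_mul_sqrt_self e]
  have hsqrt_zero : CFC.sqrt e = 0 := hρ.faithful _ hsqrt_mem (by rwa [hsqrt])
  rw [← hsqrt, hsqrt_zero, star_zero, zero_mul]

theorem IsFNTState.apply_star_mul_self {S : Set (H →L[ℂ] H)} {ρ : (H →L[ℂ] H) →ₗ[ℂ] ℂ}
    (hρ : IsFNTState S ρ) {a : H →L[ℂ] H} (ha : a ∈ S) :
    ρ (star a * a) = ((norm2 ρ a ^ 2 : ℝ) : ℂ) := by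
  obtain ⟨hre, him⟩ := Complex.nonneg_iff.mp (hρ.nonneg a ha)
  rw [norm2, Real.sq_sqrt hre]
  exact Complex.ext (by simp) (by simp [him])

theorem IsFNTState.tendsto_norm2_zero_iff {S : Set (H →L[ℂ] H)} {ρ : (H →L[ℂ] H) →ₗ[ℂ] ℂ}
    (hρ : IsFNTState S ρ) {ι : Type*} {l : Filter ι} {c : ι → H →L[ℂ] H} (hc : ∀ t, c t ∈ S) :
    Tendsto (fun t => norm2 ρ (c t)) l (𝓝 0) ↔
      Tendsto (fun t => ρ (star (c t) * c t)) l (𝓝 0) := by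
  constructor
  · intro h
    simp_rw [hρ.apply_star_mul_self (hc _)]
    simpa using ((Complex.continuous_ofReal.tendsto _).comp h).pow 2
  · intro h
    simpa [norm2, Function.comp_def] using
      (Real.continuous_sqrt.tendsto _).comp ((Complex.continuous_re.tendsto _).comp h)

theorem IsFNTState.tendsto_norm2_zero {M : VonNeumannAlgebra H}
    {ρ ρ' : (H →L[ℂ] H) →ₗ[ℂ] ℂ} (hρ : IsFNTState (M : Set (H →L[ℂ] H)) ρ)
    (hρ' : IsFNTState (M : Set (H →L[ℂ] H)) ρ') {ι : Type} {l : Filter ι}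
    {c : ι → H →L[ℂ] H} {C : ℝ} (hc : ∀ t, c t ∈ M) (hcC : ∀ t, ‖c t‖ ≤ C)
    (h : Tendsto (fun t => norm2 ρ (c t)) l (𝓝 0)) :
    Tendsto (fun t => norm2 ρ' (c t)) l (𝓝 0) := by
  rw [hρ.tendsto_norm2_zero_iff hc] at h
  rw [hρ'.tendsto_norm2_zero_iff hc, tendsto_iff_ultrafilter]
  intro U hU
  have hd : ∀ t, star (c t) * c t ∈ M := fun t => mul_mem (star_mem (hc t)) (hc t)
  have hdC : ∀ t, ‖star (c t) * c t‖ ≤ C * C := fun t => by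
    rw [CStarRing.norm_star_mul_self]
    exact mul_self_le_mul_self (norm_nonneg _) (hcC t)
  obtain ⟨e, heC, hde⟩ := exists_wotConv_of_norm_le U hdC
  have he : e ∈ M := M.mem_of_wotConv hd hde
  have hρe : ρ e = 0 :=
    tendsto_nhds_unique (hρ.tendsto_of_wotConv hd hdC he heC hde) (h.mono_left hU)
  have he0 : e = 0 := hρ.eq_zero_of_nonneg he (nonneg_of_wotConv_star_mul_self hde) hρe
  simpa [he0] using hρ'.tendsto_of_wotConv hd hdC he heC hde

theorem norm_commutator_le_of_isProjection {p : H →L[ℂ] H} (hp : IsProjection p)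
    (a : H →L[ℂ] H) : ‖p * a - a * p‖ ≤ 2 * ‖a‖ := by
  have hp1 : ‖p‖ ≤ 1 := IsStarProjection.norm_le p ⟨hp.2, hp.1⟩
  calc ‖p * a - a * p‖ ≤ ‖p‖ * ‖a‖ + ‖a‖ * ‖p‖ :=
        (norm_sub_le _ _).trans (add_le_add (norm_mul_le _ _) (norm_mul_le _ _))
    _ ≤ 2 * ‖a‖ := by nlinarith [norm_nonneg a]

theorem PropertyGammaOn.of_isFNTState {M : VonNeumannAlgebra H}
    {ρ ρ' : (H →L[ℂ] H) →ₗ[ℂ] ℂ} (hρ : IsFNTState (M : Set (H →L[ℂ] H)) ρ)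
    (hρ' : IsFNTState (M : Set (H →L[ℂ] H)) ρ') (h : PropertyGammaOn (M : Set (H →L[ℂ] H)) ρ) :
    PropertyGammaOn (M : Set (H →L[ℂ] H)) ρ' := by
  intro ε hε n hn k a ha
  choose p hp hortho hequiv hsum hcomm using
    fun m : ℕ => h (1 / (m + 1)) Nat.one_div_pos_of_nat n hn k a ha
  have hlim (i : Fin n) (j : Fin k) :
      Tendsto (fun m => norm2 ρ' (p m i * a j - a j * p m i)) atTop (𝓝 0) :=
    hρ.tendsto_norm2_zero hρ'
      (fun m => sub_mem (mul_mem (hp m i).1 (ha j)) (mul_mem (ha j) (hp m i).1))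
      (fun m => norm_commutator_le_of_isProjection (hp m i).2 (a j))
      (squeeze_zero (fun m => Real.sqrt_nonneg _) (fun m => (hcomm m i j).le)
        tendsto_one_div_add_atTop_nhds_zero_nat)
  obtain ⟨m, hm⟩ := (eventually_all.2 fun i => eventually_all.2 fun j =>
    (hlim i j).eventually_lt_const hε).exists
  exact ⟨p m, hp m, hortho m, hequiv m, hsum m, hm⟩

theorem statement2_general
    (M : VonNeumannAlgebra H)
    (ρ ρ' : (H →L[ℂ] H) →ₗ[ℂ] ℂ)
    (hρ : IsFNTState (M : Set (H →L[ℂ] H)) ρ)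
    (hρ' : IsFNTState (M : Set (H →L[ℂ] H)) ρ') :
    PropertyGammaOn (M : Set (H →L[ℂ] H)) ρ ↔ PropertyGammaOn (M : Set (H →L[ℂ] H)) ρ' :=
  ⟨PropertyGammaOn.of_isFNTState hρ hρ', PropertyGammaOn.of_isFNTState hρ' hρ⟩

/-- Property Γ of a type II₁ von Neumann algebra does not depend on the
choice of faithful normal tracial state. -/
theorem statement2
    (M : VonNeumannAlgebra H) (hM : IsTypeII1 M)
    (ρ ρ' : (H →L[ℂ] H) →ₗ[ℂ] ℂ)
    (hρ : IsFNTState (M : Set (H →L[ℂ] H)) ρ)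
    (hρ' : IsFNTState (M : Set (H →L[ℂ] H)) ρ') :
    PropertyGammaOn (M : Set (H →L[ℂ] H)) ρ ↔ PropertyGammaOn (M : Set (H →L[ℂ] H)) ρ' :=
  statement2_general M ρ ρ' hρ hρ'

end Paper
end
end

section
/- Let H be a separable complex Hilbert space and M a von Neumann algebra on H of type II₁ with a faithful normal tracial state ρ. Then M has Property Γ with respect to ρ if and only if for every positive integer n there exists a family of projections {p_{ir} : 1 ≤ i ≤ n, r ∈ ℕ} in M such that (i) for each r ∈ ℕ the projections p_{1r},…,p_{nr} are mutually orthogonal, pairwise equivalent in M, and sum to 1, and (ii) for each 1 ≤ i ≤ n and every a ∈ M, lim_{r→∞} ‖p_{ir} a − a p_{ir}‖₂ = 0. -/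
set_option maxHeartbeats 1000000
set_option synthInstance.maxHeartbeats 400000

open scoped ComplexOrder
open Filter Topology

noncomputable section

namespace Paper

variable {H : Type*} [NormedAddCommGroup H] [InnerProductSpace ℂ H] [CompleteSpace H]

/-!
Since `H` is separable, each norm-ball of `M` has a countable subset that is sequentially dense
for the strong operator topology (embed operators in `ℕ → H` by evaluation on a dense sequence,
and use equicontinuity of bounded families). On bounded sets, strong convergence to `0` forces
`b⋆b → 0` weakly, so `‖b‖₂ → 0` by normality of `ρ`. Thus `M` has a `‖·‖₂`-dense sequence
`(d m)`. Property Γ with `ε = 1 / (r + 1)` applied to `d 0, …, d (r - 1)` yields the `r`-th row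
of projections, and `‖[p, a]‖₂ ≤ 3 ‖a - d‖₂ + 2 ‖[p, d]‖₂` transfers the asymptotic
commutation from the `d m` to all of `M`. The converse is immediate by taking `r` large.
-/

section StrongDensity

variable {𝕜 E F : Type*} [NontriviallyNormedField 𝕜] [NormedAddCommGroup E] [NormedSpace 𝕜 E]
  [NormedAddCommGroup F] [NormedSpace 𝕜 F]

theorem tendsto_apply_of_tendsto_apply_denseRange {ι α : Type*} {l : Filter ι}
    {T : ι → E →L[𝕜] F} {C : ℝ} (hT : ∀ i, ‖T i‖ ≤ C) {x : α → E} (hx : DenseRange x)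
    (h : ∀ m, Tendsto (fun i => T i (x m)) l (𝓝 0)) (v : E) :
    Tendsto (fun i => T i v) l (𝓝 0) := by
  have hequi : Equicontinuous (DFunLike.coe ∘ T) := by
    have hTFAE := (NormedSpace.equicontinuous_TFAE T).out 5 1
    exact hTFAE.mp ⟨C, hT⟩
  have hclosed := hequi.isClosed_setOfPred_tendsto (l := l) continuous_zero
  have hsub : closure (Set.range x) ⊆ {v | Tendsto (fun i => T i v) l (𝓝 0)} :=
    closure_minimal (Set.range_subset_iff.2 h) hclosed
  exact hsub (hx.closure_range ▸ Set.mem_univ v)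

theorem exists_countable_subset_seq_tendsto_apply [TopologicalSpace.SeparableSpace E]
    [TopologicalSpace.SeparableSpace F] {S : Set (E →L[𝕜] F)} {C : ℝ} (hS : ∀ a ∈ S, ‖a‖ ≤ C) :
    ∃ D ⊆ S, D.Countable ∧ ∀ a ∈ S, ∃ u : ℕ → E →L[𝕜] F, (∀ n, u n ∈ D) ∧
      ∀ v, Tendsto (fun n => u n v) atTop (𝓝 (a v)) := by
  have : SecondCountableTopology F := UniformSpace.secondCountable_of_separable F
  set x := TopologicalSpace.denseSeq E
  set Φ : (E →L[𝕜] F) → ℕ → F := fun T m => T (x m)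
  obtain ⟨t, htS, htc, hSt⟩ :=
    (TopologicalSpace.IsSeparable.of_separableSpace (Φ '' S)).exists_countable_dense_subset
  set g := Function.invFunOn Φ S
  have hΦg : ∀ y ∈ t, Φ (g y) = y := fun y hy => Function.invFunOn_eq (htS hy)
  refine ⟨g '' t, ?_, htc.image g, fun a ha => ?_⟩
  · rintro _ ⟨y, hy, rfl⟩
    exact Function.invFunOn_mem (htS hy)
  obtain ⟨y, hyt, hy⟩ := mem_closure_iff_seq_limit.1 (hSt (Set.mem_image_of_mem Φ ha))
  refine ⟨fun n => g (y n), fun n => Set.mem_image_of_mem g (hyt n), fun v => ?_⟩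
  have hdense : ∀ m, Tendsto (fun n => (g (y n) - a) (x m)) atTop (𝓝 0) := by
    intro m
    have hgy : ∀ n, g (y n) (x m) = y n m := fun n => congrFun (hΦg _ (hyt n)) m
    simp only [sub_apply, hgy, ← sub_self (a (x m))]
    exact (tendsto_pi_nhds.1 hy m).sub tendsto_const_nhds
  have hbound : ∀ n, ‖g (y n) - a‖ ≤ C + C := fun n =>
    (norm_sub_le _ _).trans (add_le_add (hS _ (Function.invFunOn_mem (htS (hyt n)))) (hS a ha))
  exact tendsto_sub_nhds_zero_iff.1 <|
    tendsto_apply_of_tendsto_apply_denseRange hbound (TopologicalSpace.denseRange_denseSeq E)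
      hdense v

end StrongDensity

theorem wotConv_star_mul_self_zero {E : Type*} [NormedAddCommGroup E] [InnerProductSpace ℂ E]
    [CompleteSpace E] {ι : Type*} {l : Filter ι} {b : ι → E →L[ℂ] E} {C : ℝ}
    (hb : ∀ t, ‖b t‖ ≤ C) (h : ∀ v, Tendsto (fun t => b t v) l (𝓝 0)) :
    WOTConv l (fun t => star (b t) * b t) 0 := by
  intro x y
  have hinner : ∀ t, inner ℂ ((star (b t) * b t) x) y = inner ℂ (b t x) (b t y) := fun t =>
    ContinuousLinearMap.adjoint_inner_left (b t) y (b t x)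
  simp only [hinner, zero_apply, inner_zero_left]
  have hlim : Tendsto (fun t => ‖b t x‖ * (C * ‖y‖)) l (𝓝 0) := by
    simpa using (tendsto_zero_iff_norm_tendsto_zero.1 (h x)).mul_const (C * ‖y‖)
  refine squeeze_zero_norm (fun t => ?_) hlim
  calc ‖inner ℂ (b t x) (b t y)‖ ≤ ‖b t x‖ * ‖b t y‖ := norm_inner_le_norm _ _
    _ ≤ ‖b t x‖ * (C * ‖y‖) :=
      mul_le_mul_of_nonneg_left ((b t).le_of_opNorm_le (hb t) y) (norm_nonneg _)

theorem IsProjection.one_sub {p : H →L[ℂ] H} (hp : IsProjection p) : IsProjection (1 - p) :=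
  ⟨by rw [star_sub, star_one, hp.1], by rw [sub_mul, mul_sub, mul_sub, hp.2]; simp⟩

theorem IsProjection.star_mul_self_mul {p : H →L[ℂ] H} (hp : IsProjection p) (b : H →L[ℂ] H) :
    star (p * b) * (p * b) = star b * p * b := by
  rw [star_mul, hp.1, mul_assoc, ← mul_assoc p p, hp.2, mul_assoc]

section TracialState

variable {M : VonNeumannAlgebra H} {ρ : (H →L[ℂ] H) →ₗ[ℂ] ℂ}

theorem IsFNTState.re_nonneg (hρ : IsFNTState (M : Set (H →L[ℂ] H)) ρ) {a : H →L[ℂ] H}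
    (ha : a ∈ M) : 0 ≤ (ρ (star a * a)).re :=
  (Complex.le_def.1 (hρ.nonneg a ha)).1

theorem norm2_sq (hρ : IsFNTState (M : Set (H →L[ℂ] H)) ρ) {a : H →L[ℂ] H} (ha : a ∈ M) :
    norm2 ρ a ^ 2 = (ρ (star a * a)).re :=
  Real.sq_sqrt (hρ.re_nonneg ha)

theorem norm2_nonneg (a : H →L[ℂ] H) : 0 ≤ norm2 ρ a := Real.sqrt_nonneg _

theorem norm2_neg (a : H →L[ℂ] H) : norm2 ρ (-a) = norm2 ρ a := by
  rw [norm2, star_neg, neg_mul_neg, norm2]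

theorem norm2_star (hρ : IsFNTState (M : Set (H →L[ℂ] H)) ρ) {a : H →L[ℂ] H} (ha : a ∈ M) :
    norm2 ρ (star a) = norm2 ρ a := by
  rw [norm2, star_star, hρ.tracial a ha _ (star_mem ha), norm2]

theorem norm2_sq_add_le (hρ : IsFNTState (M : Set (H →L[ℂ] H)) ρ) {x y : H →L[ℂ] H}
    (hx : x ∈ M) (hy : y ∈ M) :
    norm2 ρ (x + y) ^ 2 ≤ 2 * norm2 ρ x ^ 2 + 2 * norm2 ρ y ^ 2 := by
  have parallelogram : star (x + y) * (x + y) + star (x - y) * (x - y)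
      = (2 : ℂ) • (star x * x) + (2 : ℂ) • (star y * y) := by
    simp only [star_add, star_sub, two_smul]
    noncomm_ring
  have hre := congrArg (fun z => (ρ z).re) parallelogram
  simp only [map_add, map_smul, Complex.add_re, smul_eq_mul, Complex.mul_re,
    Complex.re_ofNat, Complex.im_ofNat, zero_mul, sub_zero] at hre
  rw [norm2_sq hρ (add_mem hx hy), norm2_sq hρ hx, norm2_sq hρ hy]
  linarith [hρ.re_nonneg (sub_mem hx hy)]

theorem norm2_proj_mul_le (hρ : IsFNTState (M : Set (H →L[ℂ] H)) ρ) {p b : H →L[ℂ] H}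
    (hpM : p ∈ M) (hp : IsProjection p) (hb : b ∈ M) : norm2 ρ (p * b) ≤ norm2 ρ b := by
  have hsplit : star (p * b) * (p * b) + star ((1 - p) * b) * ((1 - p) * b) = star b * b := by
    rw [hp.star_mul_self_mul, hp.one_sub.star_mul_self_mul]
    noncomm_ring
  have hre := congrArg (fun z => (ρ z).re) hsplit
  simp only [map_add, Complex.add_re] at hre
  exact Real.sqrt_le_sqrt (by linarith [hρ.re_nonneg (mul_mem (sub_mem (one_mem M) hpM) hb)])

theorem norm2_mul_proj_le (hρ : IsFNTState (M : Set (H →L[ℂ] H)) ρ) {p b : H →L[ℂ] H}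
    (hpM : p ∈ M) (hp : IsProjection p) (hb : b ∈ M) : norm2 ρ (b * p) ≤ norm2 ρ b := by
  rw [← norm2_star hρ (mul_mem hb hpM), star_mul, hp.1, ← norm2_star hρ hb]
  exact norm2_proj_mul_le hρ hpM hp (star_mem hb)

/-- The constants come from `norm2_sq_add_le`, used in place of the triangle inequality. -/
theorem norm2_commutator_le (hρ : IsFNTState (M : Set (H →L[ℂ] H)) ρ) {p a d : H →L[ℂ] H}
    (hpM : p ∈ M) (hp : IsProjection p) (ha : a ∈ M) (hd : d ∈ M) :
    norm2 ρ (p * a - a * p) ≤ 3 * norm2 ρ (a - d) + 2 * norm2 ρ (p * d - d * p) := by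
  have he : a - d ∈ M := sub_mem ha hd
  have hsplit : p * a - a * p = (p * (a - d) + -((a - d) * p)) + (p * d - d * p) := by
    noncomm_ring
  have hx := norm2_sq_add_le hρ (mul_mem hpM he) (neg_mem (mul_mem he hpM))
  have hxw := norm2_sq_add_le hρ (add_mem (mul_mem hpM he) (neg_mem (mul_mem he hpM)))
    (sub_mem (mul_mem hpM hd) (mul_mem hd hpM))
  rw [norm2_neg] at hx
  have hl := norm2_proj_mul_le hρ hpM hp he
  have hr := norm2_mul_proj_le hρ hpM hp he
  rw [hsplit]
  refine le_of_sq_le_sq ?_ <|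
    add_nonneg (mul_nonneg zero_le_three (norm2_nonneg _)) (mul_nonneg zero_le_two (norm2_nonneg _))
  nlinarith [norm2_nonneg (ρ := ρ) (p * (a - d)), norm2_nonneg (ρ := ρ) ((a - d) * p),
    norm2_nonneg (ρ := ρ) (a - d), norm2_nonneg (ρ := ρ) (p * d - d * p)]

theorem IsFNTState.tendsto_zero_of_wotConv (hρ : IsFNTState (M : Set (H →L[ℂ] H)) ρ)
    {ι : Type} {l : Filter ι} {T : ι → H →L[ℂ] H} (hTM : ∀ t, T t ∈ M) {C : ℝ}
    (hTC : ∀ t, ‖T t‖ ≤ C) (hT : WOTConv l T 0) : Tendsto (fun t => ρ (T t)) l (𝓝 0) := by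
  set c : ℂ := ((|C| + 1 : ℝ) : ℂ)
  have hc : c ≠ 0 := Complex.ofReal_ne_zero.2 (by positivity)
  have hnorm : ∀ t, ‖c⁻¹ • T t‖ ≤ 1 := fun t => by
    rw [norm_smul, norm_inv, Complex.norm_real, Real.norm_of_nonneg (by positivity),
      inv_mul_le_one₀ (by positivity)]
    linarith [hTC t, le_abs_self C]
  have hwot : WOTConv l (fun t => c⁻¹ • T t) 0 := fun x y => by
    simpa [inner_smul_left] using (hT x y).mul_const (starRingEnd ℂ c⁻¹)
  have hlim := hρ.normal l _ 0 (fun t => M.toStarSubalgebra.smul_mem (hTM t) c⁻¹) hnorm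
    (zero_mem M) (by simp) hwot
  simp only [map_smul, smul_eq_mul, map_zero] at hlim
  simpa [hc] using hlim.const_mul c

theorem tendsto_norm2_zero_of_tendsto_apply (hρ : IsFNTState (M : Set (H →L[ℂ] H)) ρ)
    {ι : Type} {l : Filter ι} {b : ι → H →L[ℂ] H} (hbM : ∀ t, b t ∈ M) {C : ℝ}
    (hbC : ∀ t, ‖b t‖ ≤ C) (h : ∀ v, Tendsto (fun t => b t v) l (𝓝 0)) :
    Tendsto (fun t => norm2 ρ (b t)) l (𝓝 0) := by
  have hbound : ∀ t, ‖star (b t) * b t‖ ≤ C * C := fun t =>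
    (norm_mul_le _ _).trans <| by
      rw [norm_star]
      exact mul_le_mul (hbC t) (hbC t) (norm_nonneg _) ((norm_nonneg _).trans (hbC t))
  have hρ0 := hρ.tendsto_zero_of_wotConv (fun t => mul_mem (star_mem (hbM t)) (hbM t)) hbound
    (wotConv_star_mul_self_zero hbC h)
  simpa [norm2, Function.comp_def] using (Real.continuous_sqrt.tendsto 0).comp
    ((Complex.continuous_re.tendsto 0).comp hρ0)

theorem exists_seq_dense_norm2 [TopologicalSpace.SeparableSpace H]
    (hρ : IsFNTState (M : Set (H →L[ℂ] H)) ρ) :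
    ∃ d : ℕ → H →L[ℂ] H, (∀ m, d m ∈ M) ∧ ∀ a ∈ M, ∀ ε > 0, ∃ m, norm2 ρ (a - d m) < ε := by
  choose D hDM hDc hD using fun R : ℕ =>
    exists_countable_subset_seq_tendsto_apply (S := {a | a ∈ M ∧ ‖a‖ ≤ R}) fun _ ha => ha.2
  have hcount : (insert 0 (⋃ R, D R)).Countable := (Set.countable_iUnion hDc).insert 0
  obtain ⟨d, hd⟩ := hcount.exists_eq_range (Set.insert_nonempty _ _)
  have hdM : ∀ m, d m ∈ M := by
    intro m
    obtain h0 | hU := Set.mem_insert_iff.1 (hd ▸ Set.mem_range_self m : d m ∈ _)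
    · exact h0 ▸ zero_mem M
    · obtain ⟨R, hR⟩ := Set.mem_iUnion.1 hU
      exact (hDM R hR).1
  refine ⟨d, hdM, fun a ha ε hε => ?_⟩
  obtain ⟨u, huD, hu⟩ := hD ⌈‖a‖⌉₊ a ⟨ha, Nat.le_ceil _⟩
  have huM : ∀ n, u n ∈ M := fun n => (hDM _ (huD n)).1
  have hlim := tendsto_norm2_zero_of_tendsto_apply hρ (fun n => sub_mem ha (huM n))
    (fun n => norm_sub_le_of_le (Nat.le_ceil _) (hDM _ (huD n)).2)
    (fun v => by simpa only [sub_apply, sub_self] using (hu v).const_sub (a v))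
  obtain ⟨n, hn⟩ := (hlim.eventually (gt_mem_nhds hε)).exists
  obtain ⟨m, hm⟩ : u n ∈ Set.range d :=
    hd ▸ Set.mem_insert_of_mem _ (Set.mem_iUnion.2 ⟨_, huD n⟩)
  exact ⟨m, hm ▸ hn⟩

theorem tendsto_norm2_commutator_of_dense (hρ : IsFNTState (M : Set (H →L[ℂ] H)) ρ)
    {d : ℕ → H →L[ℂ] H} (hdM : ∀ m, d m ∈ M)
    (hd : ∀ a ∈ M, ∀ ε > 0, ∃ m, norm2 ρ (a - d m) < ε) {P : ℕ → H →L[ℂ] H}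
    (hPM : ∀ r, P r ∈ M) (hP : ∀ r, IsProjection (P r))
    (hPd : ∀ r (j : Fin r), norm2 ρ (P r * d j - d j * P r) < 1 / (r + 1))
    {a : H →L[ℂ] H} (ha : a ∈ M) :
    Tendsto (fun r => norm2 ρ (P r * a - a * P r)) atTop (𝓝 0) := by
  rw [Metric.tendsto_atTop]
  intro ε hε
  obtain ⟨m, hm⟩ := hd a ha (ε / 6) (by positivity)
  obtain ⟨N, hN⟩ := exists_nat_one_div_lt (show 0 < ε / 4 by positivity)
  refine ⟨max N (m + 1), fun r hr => ?_⟩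
  have hrN : 1 / ((r : ℝ) + 1) ≤ 1 / ((N : ℝ) + 1) := by
    gcongr
    exact_mod_cast (le_max_left _ _).trans hr
  have hPdm := hPd r ⟨m, (le_max_right _ _).trans hr⟩
  have hcomm := norm2_commutator_le hρ (hPM r) (hP r) ha (hdM m)
  rw [Real.dist_eq, sub_zero, abs_of_nonneg (norm2_nonneg _)]
  linarith

end TracialState

theorem propertyGammaOn_of_exists_seq {S : Set (H →L[ℂ] H)} {ρ : (H →L[ℂ] H) →ₗ[ℂ] ℂ}
    (h : ∀ n : ℕ, 0 < n → ∃ p : Fin n → ℕ → H →L[ℂ] H,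
      (∀ i r, p i r ∈ S ∧ IsProjection (p i r)) ∧
      (∀ r, ∀ i j, i ≠ j → p i r * p j r = 0) ∧
      (∀ r i j, EquivProj S (p i r) (p j r)) ∧
      (∀ r, (∑ i, p i r) = 1) ∧
      ∀ i, ∀ a ∈ S, Tendsto (fun r => norm2 ρ (p i r * a - a * p i r)) atTop (𝓝 0)) :
    PropertyGammaOn S ρ := by
  intro ε hε n hn k a ha
  obtain ⟨p, hpS, horth, hequiv, hsum, hlim⟩ := h n hn
  have hev : ∀ᶠ r in atTop, ∀ i j, norm2 ρ (p i r * a j - a j * p i r) < ε :=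
    eventually_all.2 fun i => eventually_all.2 fun j =>
      (hlim i (a j) (ha j)).eventually (gt_mem_nhds hε)
  obtain ⟨r, hr⟩ := hev.exists
  exact ⟨fun i => p i r, fun i => hpS i r, horth r, hequiv r, hsum r, hr⟩

theorem statement3_general [TopologicalSpace.SeparableSpace H]
    (M : VonNeumannAlgebra H)
    (ρ : (H →L[ℂ] H) →ₗ[ℂ] ℂ) (hρ : IsFNTState (M : Set (H →L[ℂ] H)) ρ) :
    PropertyGammaOn (M : Set (H →L[ℂ] H)) ρ ↔
      ∀ n : ℕ, 0 < n →
        ∃ p : Fin n → ℕ → H →L[ℂ] H,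
          (∀ i r, p i r ∈ M ∧ IsProjection (p i r)) ∧
          (∀ r, ∀ i j, i ≠ j → p i r * p j r = 0) ∧
          (∀ r i j, EquivProj (M : Set (H →L[ℂ] H)) (p i r) (p j r)) ∧
          (∀ r, (∑ i, p i r) = 1) ∧
          ∀ i, ∀ a ∈ M, Tendsto (fun r => norm2 ρ (p i r * a - a * p i r)) atTop (𝓝 0) := by
  refine ⟨fun hΓ n hn => ?_, propertyGammaOn_of_exists_seq⟩
  obtain ⟨d, hdM, hd⟩ := exists_seq_dense_norm2 hρ
  -- row `r` almost commutes, up to `1 / (r + 1)`, with the first `r` terms of `d`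
  choose P hP horth hequiv hsum hPd using fun r : ℕ =>
    hΓ (1 / (r + 1)) (by positivity) n hn r (fun j => d j) (fun j => hdM j)
  exact ⟨fun i r => P r i, fun i r => hP r i, horth, hequiv, hsum, fun i a ha =>
    tendsto_norm2_commutator_of_dense hρ hdM hd (fun r => (hP r i).1) (fun r => (hP r i).2)
      (fun r j => hPd r i j) ha⟩

/-- For a type II₁ von Neumann algebra `M` on a separable Hilbert space with
faithful normal tracial state `ρ` : `M` has Property Γ iff for every `n ≥ 1` there is a family
of projections `{p_{ir}}` (each row mutually orthogonal, pairwise equivalent, summing to `1`)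
with `‖p_{ir} a − a p_{ir}‖₂ → 0` as `r → ∞` for every `a ∈ M`. -/
theorem statement3 [TopologicalSpace.SeparableSpace H]
    (M : VonNeumannAlgebra H) (hM : IsTypeII1 M)
    (ρ : (H →L[ℂ] H) →ₗ[ℂ] ℂ) (hρ : IsFNTState (M : Set (H →L[ℂ] H)) ρ) :
    PropertyGammaOn (M : Set (H →L[ℂ] H)) ρ ↔
      ∀ n : ℕ, 0 < n →
        ∃ p : Fin n → ℕ → H →L[ℂ] H,
          (∀ i r, p i r ∈ M ∧ IsProjection (p i r)) ∧
          (∀ r, ∀ i j, i ≠ j → p i r * p j r = 0) ∧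
          (∀ r i j, EquivProj (M : Set (H →L[ℂ] H)) (p i r) (p j r)) ∧
          (∀ r, (∑ i, p i r) = 1) ∧
          ∀ i, ∀ a ∈ M, Tendsto (fun r => norm2 ρ (p i r * a - a * p i r)) atTop (𝓝 0) :=
  statement3_general M ρ hρ

end Paper
end
end
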